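/- Let C_1,…,C_u be q-ary completely regular codes of length n with covering radius 1 and the same intersection array {b_0; c_1}. Then the direct sum C = C_1 ⊕ ⋯ ⊕ C_u = {(c_1,…,c_u) : c_i ∈ C_i} has covering radius u and is completely regular with intersection numbers b(u)_i = (u−i)b_0 and c(u)_i = i·c_1 for i = 0,…,u. -/

import Mathlib

/-!
The distance from a word to the direct sum is the sum of the distances of its blocks to the
component codes; taking every block outside its code gives the covering radius `u`. A neighbour
of a word differs from it in exactly one block, so the neighbours of `x` one level up (down) are
counted block by block: block `i` contributes `b(dᵢ)` (`c(dᵢ)`) by complete regularity of `Cᵢ`,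
where `dᵢ ∈ {0, 1}` is its distance to `Cᵢ`. With `b(ℓ) = (1 - ℓ) b₀` and `c(ℓ) = ℓ c₁` these
sum to `(u - d) b₀` and `d c₁`, where `d = ∑ dᵢ`.
-/

/-- Distance from a vector to a code (general finite index set). -/
noncomputable def distToCode {ι F : Type*} [Fintype ι] [DecidableEq F]
    (C : Set (ι → F)) (x : ι → F) : ℕ :=
  sInf {d | ∃ c ∈ C, hammingDist x c = d}

/-- Covering radius. -/
noncomputable def covRad {ι F : Type*} [Fintype ι] [DecidableEq F]
    (C : Set (ι → F)) : ℕ :=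
  sSup (Set.range (distToCode C))

/-- `C` is completely regular with intersection numbers `b ℓ` (neighbors one level up)
and `c ℓ` (neighbors one level down): the distance partition is equitable. -/
noncomputable def IsCRWith {ι F : Type*} [Fintype ι] [DecidableEq F]
    (C : Set (ι → F)) (b c : ℕ → ℕ) : Prop :=
  ∀ x : ι → F,
    Nat.card {y : ι → F // hammingDist x y = 1 ∧ distToCode C y = distToCode C x + 1}
      = b (distToCode C x) ∧
    Nat.card {y : ι → F // hammingDist x y = 1 ∧ distToCode C y + 1 = distToCode C x}
      = c (distToCode C x)

open Function

theorem Fintype.sum_apply_update_add {κ M : Type*} {β : κ → Type*} [Fintype κ] [DecidableEq κ]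
    [AddCommMonoid M] (g : ∀ j, β j → M) (x : ∀ j, β j) (i : κ) (z : β i) :
    ∑ j, g j (update x i z j) + g i (x i) = ∑ j, g j (x j) + g i z := by
  have hupd (w : β i) :
      ∑ j, g j (update x i w j) = g i w + ∑ j ∈ Finset.univ \ {i}, g j (x j) := by
    simp only [apply_update g]
    exact Finset.sum_update_of_mem (Finset.mem_univ i) _ _
  have hself := hupd (x i)
  rw [update_eq_self] at hself
  rw [hupd z, hself]
  abel

section Codes

variable {ι F : Type*} [Fintype ι] [DecidableEq F]

theorem distToCode_le_hammingDist {C : Set (ι → F)} {c : ι → F} (x : ι → F) (hc : c ∈ C) :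
    distToCode C x ≤ hammingDist x c :=
  Nat.sInf_le ⟨c, hc, rfl⟩

theorem exists_hammingDist_eq_distToCode {C : Set (ι → F)} (hC : C.Nonempty) (x : ι → F) :
    ∃ c ∈ C, hammingDist x c = distToCode C x :=
  let ⟨c, hc⟩ := hC
  Nat.sInf_mem (s := {d | ∃ c ∈ C, hammingDist x c = d}) ⟨hammingDist x c, c, hc, rfl⟩

theorem distToCode_eq_zero_iff {C : Set (ι → F)} (hC : C.Nonempty) {x : ι → F} :
    distToCode C x = 0 ↔ x ∈ C := by
  refine ⟨fun h => ?_, fun h => Nat.le_zero.mp ?_⟩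
  · obtain ⟨c, hc, hxc⟩ := exists_hammingDist_eq_distToCode hC x
    rw [h, hammingDist_eq_zero] at hxc
    rwa [hxc]
  · simpa using distToCode_le_hammingDist x h

end Codes

section Rows

variable {κ ι F : Type*}

theorem hammingDist_eq_sum_curry [Fintype κ] [Fintype ι] [DecidableEq F] (x y : κ × ι → F) :
    hammingDist x y = ∑ i, hammingDist (curry x i) (curry y i) := by
  simp only [hammingDist, Finset.card_eq_sum_ones, Finset.sum_filter]
  exact Fintype.sum_prod_type _

variable [DecidableEq κ]

def updateRow (x : κ × ι → F) (i : κ) (z : ι → F) : κ × ι → F :=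
  uncurry (update (curry x) i z)

@[simp]
theorem curry_updateRow (x : κ × ι → F) (i : κ) (z : ι → F) :
    curry (updateRow x i z) = update (curry x) i z :=
  curry_uncurry _

theorem updateRow_injective_of_ne {x : κ × ι → F} {i i' : κ} {z z' : ι → F}
    (hz : z ≠ curry x i) (h : updateRow x i z = updateRow x i' z') : i = i' ∧ z = z' := by
  have hrows := congrArg curry h
  simp only [curry_updateRow] at hrows
  obtain rfl : i = i' := by
    by_contra hii
    apply hz
    simpa [hii] using congrFun hrows i
  exact ⟨rfl, update_injective _ _ hrows⟩

variable [Fintype κ] [Fintype ι] [DecidableEq F]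

theorem hammingDist_updateRow (x : κ × ι → F) (i : κ) (z : ι → F) :
    hammingDist x (updateRow x i z) = hammingDist (curry x i) z := by
  rw [hammingDist_eq_sum_curry, curry_updateRow, Finset.sum_eq_single i]
  · simp
  · intro j _ hji
    simp [hji]
  · simp

theorem eq_updateRow_of_hammingDist_eq_one {x y : κ × ι → F} (h : hammingDist x y = 1) :
    ∃ i, y = updateRow x i (curry y i) := by
  rw [hammingDist_eq_sum_curry] at h
  obtain ⟨i, -, hi⟩ : ∃ i ∈ Finset.univ, hammingDist (curry x i) (curry y i) ≠ 0 := by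
    by_contra! h0
    rw [Finset.sum_eq_zero h0] at h
    exact zero_ne_one h
  have hrow : ∀ j ≠ i, curry y j = curry x j := fun j hji => by
    have := Finset.add_le_sum (f := fun j => hammingDist (curry x j) (curry y j))
      (fun _ _ => Nat.zero_le _) (Finset.mem_univ i) (Finset.mem_univ j) hji.symm
    exact (hammingDist_eq_zero.mp (by omega)).symm
  refine ⟨i, ?_⟩
  rw [← uncurry_curry y, updateRow, curry_uncurry]
  congr 1
  ext j : 1
  rcases eq_or_ne j i with rfl | hji
  · simp
  · simp [hji, hrow j hji]

theorem card_neighbors_eq_sum [Finite F] (x : κ × ι → F) (P : (κ × ι → F) → Prop) :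
    Nat.card {y // hammingDist x y = 1 ∧ P y} =
      ∑ i, Nat.card {z // hammingDist (curry x i) z = 1 ∧ P (updateRow x i z)} := by
  rw [← Nat.card_sigma]
  refine (Nat.card_congr (Equiv.ofBijective
    (fun p => ⟨updateRow x p.1 p.2, (hammingDist_updateRow x _ _).trans p.2.2.1, p.2.2.2⟩)
    ⟨?_, ?_⟩)).symm
  · rintro ⟨i, z, hz, _⟩ ⟨i', z', _⟩ h
    have hne : z ≠ curry x i := by
      rintro rfl
      simp at hz
    obtain ⟨rfl, rfl⟩ := updateRow_injective_of_ne hne (congrArg Subtype.val h)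
    rfl
  · rintro ⟨y, hy, hP⟩
    obtain ⟨i, hyi⟩ := eq_updateRow_of_hammingDist_eq_one hy
    refine ⟨⟨i, curry y i, ?_, hyi ▸ hP⟩, Subtype.ext hyi.symm⟩
    rwa [← hammingDist_updateRow, ← hyi]

end Rows

section DirectSum

variable {κ ι F : Type*}

/-- The direct sum `C₁ ⊕ ⋯ ⊕ Cᵤ`, with `F^{nu}` modelled as `κ × ι → F`: the `i`-th block of
a word `x` is the row `curry x i`. -/
def directSumCode (C : κ → Set (ι → F)) : Set (κ × ι → F) :=
  {x | ∀ i, curry x i ∈ C i}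

theorem directSumCode_nonempty {C : κ → Set (ι → F)} (hne : ∀ i, (C i).Nonempty) :
    (directSumCode C).Nonempty := by
  choose c hc using hne
  exact ⟨uncurry c, hc⟩

variable [Fintype κ] [Fintype ι] [DecidableEq F] {C : κ → Set (ι → F)}

theorem distToCode_directSumCode (hne : ∀ i, (C i).Nonempty) (x : κ × ι → F) :
    distToCode (directSumCode C) x = ∑ i, distToCode (C i) (curry x i) := by
  apply le_antisymm
  · choose c hc hxc using fun i => exists_hammingDist_eq_distToCode (hne i) (curry x i)
    calc distToCode (directSumCode C) x ≤ hammingDist x (uncurry c) :=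
          distToCode_le_hammingDist x hc
      _ = ∑ i, distToCode (C i) (curry x i) := by
          rw [hammingDist_eq_sum_curry, curry_uncurry]
          exact Finset.sum_congr rfl fun i _ => hxc i
  · obtain ⟨c, hc, hxc⟩ := exists_hammingDist_eq_distToCode (directSumCode_nonempty hne) x
    rw [← hxc, hammingDist_eq_sum_curry]
    exact Finset.sum_le_sum fun i _ => distToCode_le_hammingDist _ (hc i)

theorem isGreatest_range_distToCode_directSumCode (hne : ∀ i, (C i).Nonempty)
    (hproper : ∀ i, C i ≠ Set.univ) (hcov : ∀ i x, distToCode (C i) x ≤ 1) :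
    IsGreatest (Set.range (distToCode (directSumCode C))) (Fintype.card κ) := by
  rw [funext (distToCode_directSumCode hne)]
  refine ⟨?_, ?_⟩
  · choose y hy using fun i => (Set.ne_univ_iff_exists_notMem _).mp (hproper i)
    have hrow (i : κ) : distToCode (C i) (y i) = 1 :=
      le_antisymm (hcov i _) <| Nat.one_le_iff_ne_zero.mpr <|
        (distToCode_eq_zero_iff (hne i)).not.mpr (hy i)
    exact ⟨uncurry y, by simp [hrow]⟩
  · rintro _ ⟨x, rfl⟩
    simpa using Finset.sum_le_sum fun i (_ : i ∈ Finset.univ) => hcov i (curry x i)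

variable [DecidableEq κ]

theorem distToCode_directSumCode_updateRow (hne : ∀ i, (C i).Nonempty) (x : κ × ι → F)
    (i : κ) (z : ι → F) :
    distToCode (directSumCode C) (updateRow x i z) + distToCode (C i) (curry x i) =
      distToCode (directSumCode C) x + distToCode (C i) z := by
  simp only [distToCode_directSumCode hne, curry_updateRow]
  exact Fintype.sum_apply_update_add (fun j => distToCode (C j)) (curry x) i z

variable [Finite F] {b c : κ → ℕ → ℕ}

theorem card_up_neighbors_directSumCode (hne : ∀ i, (C i).Nonempty)
    (hCR : ∀ i, IsCRWith (C i) (b i) (c i)) (x : κ × ι → F) :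
    Nat.card {y // hammingDist x y = 1 ∧
        distToCode (directSumCode C) y = distToCode (directSumCode C) x + 1} =
      ∑ i, b i (distToCode (C i) (curry x i)) := by
  rw [card_neighbors_eq_sum]
  refine Finset.sum_congr rfl fun i _ => ?_
  rw [← (hCR i (curry x i)).1]
  refine Nat.card_congr (Equiv.subtypeEquivRight fun z => and_congr_right fun _ => ?_)
  have := distToCode_directSumCode_updateRow hne x i z
  omega

theorem card_down_neighbors_directSumCode (hne : ∀ i, (C i).Nonempty)
    (hCR : ∀ i, IsCRWith (C i) (b i) (c i)) (x : κ × ι → F) :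
    Nat.card {y // hammingDist x y = 1 ∧
        distToCode (directSumCode C) y + 1 = distToCode (directSumCode C) x} =
      ∑ i, c i (distToCode (C i) (curry x i)) := by
  rw [card_neighbors_eq_sum]
  refine Finset.sum_congr rfl fun i _ => ?_
  rw [← (hCR i (curry x i)).2]
  refine Nat.card_congr (Equiv.subtypeEquivRight fun z => and_congr_right fun _ => ?_)
  have := distToCode_directSumCode_updateRow hne x i z
  omega

end DirectSum

theorem stmt12_general {n u b0 c1 : ℕ} {F : Type*} [Fintype F] [DecidableEq F]
    (C : Fin u → Set (Fin n → F))
    (hne : ∀ i, (C i).Nonempty)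
    (hproper : ∀ i, C i ≠ Set.univ)
    (hcov1 : ∀ i x, distToCode (C i) x ≤ 1)
    (hCR : ∀ i, IsCRWith (C i) (fun ℓ => (1 - ℓ) * b0) (fun ℓ => ℓ * c1))
    (D : Set (Fin u × Fin n → F))
    (hD : D = {x | ∀ i : Fin u, (fun j => x (i, j)) ∈ C i}) :
    covRad D = u ∧ IsCRWith D (fun ℓ => (u - ℓ) * b0) (fun ℓ => ℓ * c1) := by
  obtain rfl : D = directSumCode C := hD
  refine ⟨(isGreatest_range_distToCode_directSumCode hne hproper hcov1).csSup_eq.trans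
    (Fintype.card_fin u), fun x => ?_⟩
  rw [card_up_neighbors_directSumCode hne hCR, card_down_neighbors_directSumCode hne hCR,
    distToCode_directSumCode hne, ← Finset.sum_mul, ← Finset.sum_mul,
    Finset.sum_tsub_distrib _ fun i _ => hcov1 i _]
  simp

/-- Direct sum of u completely regular codes with covering radius 1 and the same
intersection array {b0; c1}: the direct sum has covering radius u and is completely
regular with b(u)_i = (u−i)·b0 and c(u)_i = i·c1. -/
theorem stmt12 {n u b0 c1 : ℕ} (hu : 0 < u) {F : Type*} [Fintype F] [DecidableEq F]
    (C : Fin u → Set (Fin n → F))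
    (hne : ∀ i, (C i).Nonempty)
    (hproper : ∀ i, C i ≠ Set.univ)
    (hcov1 : ∀ i x, distToCode (C i) x ≤ 1)
    (hCR : ∀ i, IsCRWith (C i) (fun ℓ => (1 - ℓ) * b0) (fun ℓ => ℓ * c1))
    (D : Set (Fin u × Fin n → F))
    (hD : D = {x | ∀ i : Fin u, (fun j => x (i, j)) ∈ C i}) :
    covRad D = u ∧ IsCRWith D (fun ℓ => (u - ℓ) * b0) (fun ℓ => ℓ * c1) :=
  stmt12_general C hne hproper hcov1 hCR D hD
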